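/- arXiv:1905.07647 — 2 statements merged into one kernel-verified Lean document; each statement's English description precedes it below -/
import Mathlib

section
/- Let F ⊂ R^m be a finite spanning set and let S_KY be the m-element subset of F produced by the (modified) Kumar–Yildirim method, in which at step j a direction b is chosen from the orthogonal complement of span(S_j) and f_{(j)} maximizes |f'b| over F \ S_j. Then det(M(S_KY))^{1/m} ≥ (π / (4m Γ(1+m/2)^{2/m})) · det(M(S*))^{1/m}, where S* is the D-optimal m-element subset. -/
/-!
Rescale `b k` so that `g k ⬝ᵥ b k = 1`. The matrix `(g i ⬝ᵥ b k)` is then unit lower triangular,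
so `det G * det B = 1`, while the greedy choice gives `|f ⬝ᵥ b k| ≤ 1` for every `f ∈ F`.
Expanding `det (U * Bᵀ)` over permutations yields `|det U| ≤ m! * |det G|` for any `m` vectors
`U` of `F`. The constant comes from `π ^ m * (m!) ^ 2 ≤ (4m) ^ m * Γ(1 + m/2) ^ 2`,
which Legendre's duplication formula reduces to `π ^ m * Γ((m + 1)/2) ^ 2 ≤ π * m ^ m`,
proved by induction from `m` to `m + 2`.
-/

open Matrix Real
open scoped Nat

namespace Real

theorem three_mul_pow_le_add_two_pow {m : ℕ} (hm : 0 < m) : 3 * (m : ℝ) ^ m ≤ (m + 2) ^ m := by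
  have hm' : (0 : ℝ) < m := by exact_mod_cast hm
  have hbern := one_add_mul_le_pow (a := 2 / (m : ℝ)) (by linarith [div_pos two_pos hm']) m
  rw [mul_div_cancel₀ _ hm'.ne'] at hbern
  calc 3 * (m : ℝ) ^ m ≤ (1 + 2 / m) ^ m * m ^ m := by gcongr; linarith
    _ = (m + 2) ^ m := by rw [← mul_pow, add_mul, div_mul_cancel₀ _ hm'.ne', one_mul, add_comm]

theorem pi_sq_mul_pow_le (m : ℕ) :
    π ^ 2 * (((m : ℝ) + 1) ^ 2 * (m : ℝ) ^ m) ≤ 4 * ((m : ℝ) + 2) ^ (m + 2) := by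
  have hpi : π ^ 2 < 10 := by nlinarith [pi_lt_d2, pi_pos]
  rcases m.eq_zero_or_pos with rfl | hm
  · norm_num; linarith
  · have hsq : ((m : ℝ) + 1) ^ 2 ≤ (m + 2) ^ 2 := by gcongr; linarith
    calc π ^ 2 * (((m : ℝ) + 1) ^ 2 * (m : ℝ) ^ m) ≤ 12 * (((m : ℝ) + 2) ^ 2 * (m : ℝ) ^ m) := by
          gcongr; linarith
      _ = 4 * (((m : ℝ) + 2) ^ 2 * (3 * (m : ℝ) ^ m)) := by ring
      _ ≤ 4 * ((m : ℝ) + 2) ^ (m + 2) := by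
          rw [pow_add _ m 2, mul_comm (((m : ℝ) + 2) ^ m)]
          gcongr
          exact three_mul_pow_le_add_two_pow hm

theorem pi_pow_mul_Gamma_sq_le (m : ℕ) :
    π ^ m * Gamma (((m : ℝ) + 1) / 2) ^ 2 ≤ π * (m : ℝ) ^ m := by
  induction m using Nat.twoStepInduction with
  | zero => norm_num [Gamma_one_half_eq, sq_sqrt pi_pos.le]
  | one => norm_num
  | more m ih _ =>
    have hrec : Gamma ((((m + 2 : ℕ) : ℝ) + 1) / 2) = (m + 1) / 2 * Gamma ((m + 1) / 2) := by
      rw [← Gamma_add_one (by positivity)]; push_cast; ring_nf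
    rw [hrec]
    calc π ^ (m + 2) * (((m : ℝ) + 1) / 2 * Gamma ((m + 1) / 2)) ^ 2
        = π ^ 2 * (m + 1) ^ 2 / 4 * (π ^ m * Gamma ((m + 1) / 2) ^ 2) := by ring
      _ ≤ π ^ 2 * (m + 1) ^ 2 / 4 * (π * m ^ m) := by gcongr
      _ = π / 4 * (π ^ 2 * (((m : ℝ) + 1) ^ 2 * (m : ℝ) ^ m)) := by ring
      _ ≤ π / 4 * (4 * ((m : ℝ) + 2) ^ (m + 2)) := by gcongr ?_ * ?_; exact pi_sq_mul_pow_le m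
      _ = π * ((m + 2 : ℕ) : ℝ) ^ (m + 2) := by push_cast; ring

theorem pi_pow_mul_factorial_sq_le (m : ℕ) :
    π ^ m * (m ! : ℝ) ^ 2 ≤ (4 * m) ^ m * Gamma (1 + m / 2) ^ 2 := by
  have hdup := Gamma_mul_Gamma_add_half (((m : ℝ) + 1) / 2)
  rw [show ((m : ℝ) + 1) / 2 + 1 / 2 = 1 + m / 2 by ring,
    show 2 * (((m : ℝ) + 1) / 2) = m + 1 by ring, Gamma_nat_eq_factorial,
    show (1 : ℝ) - (m + 1) = -m by ring, rpow_neg zero_le_two, rpow_natCast] at hdup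
  have hsq : π * (m ! : ℝ) ^ 2 = 4 ^ m * (Gamma ((m + 1) / 2) * Gamma (1 + m / 2)) ^ 2 := by
    rw [hdup, mul_pow, mul_pow, sq_sqrt pi_pos.le, show (4 : ℝ) ^ m = (2 ^ m) ^ 2 by
      rw [← pow_mul, mul_comm, pow_mul]; norm_num]
    field_simp
  refine le_of_mul_le_mul_left ?_ pi_pos
  calc π * (π ^ m * (m ! : ℝ) ^ 2)
      = π ^ m * Gamma ((m + 1) / 2) ^ 2 * (4 ^ m * Gamma (1 + m / 2) ^ 2) := by
        rw [mul_left_comm, hsq]; ring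
    _ ≤ π * m ^ m * (4 ^ m * Gamma (1 + m / 2) ^ 2) := by
        gcongr ?_ * _; exact pi_pow_mul_Gamma_sq_le m
    _ = π * ((4 * m) ^ m * Gamma (1 + m / 2) ^ 2) := by ring

theorem mul_rpow_one_div_le_of_pow_mul_le {m : ℕ} (hm : m ≠ 0) {c x y : ℝ} (hc : 0 ≤ c)
    (hy : 0 ≤ y) (h : c ^ m * y ≤ x) : c * y ^ ((1 : ℝ) / m) ≤ x ^ ((1 : ℝ) / m) := by
  calc c * y ^ ((1 : ℝ) / m) = (c ^ m * y) ^ ((1 : ℝ) / m) := by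
        rw [mul_rpow (by positivity) hy, one_div, pow_rpow_inv_natCast hc hm]
    _ ≤ x ^ ((1 : ℝ) / m) := by gcongr

theorem pi_div_pow_mul_factorial_sq_le_one {m : ℕ} (hm : m ≠ 0) :
    (π / (4 * m * Gamma (1 + m / 2) ^ ((2 : ℝ) / m))) ^ m * (m ! : ℝ) ^ 2 ≤ 1 := by
  have hΓ : 0 < Gamma (1 + m / 2) := Gamma_pos_of_pos (by positivity)
  have hpow : (Gamma (1 + m / 2) ^ ((2 : ℝ) / m)) ^ m = Gamma (1 + m / 2) ^ 2 := by
    rw [← rpow_natCast, ← rpow_mul hΓ.le, div_mul_cancel₀ _ (Nat.cast_ne_zero.mpr hm)]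
    exact rpow_two _
  rw [div_pow, mul_pow, hpow, div_mul_eq_mul_div, div_le_one (by positivity)]
  exact pi_pow_mul_factorial_sq_le m

end Real

namespace Matrix

variable {n K : Type*} [Fintype n]

theorem of_mul_transpose_of_apply [CommRing K] (u b : n → n → K) (i k : n) :
    (of u * (of b)ᵀ) i k = u i ⬝ᵥ b k := by
  simp [mul_apply, dotProduct]

variable [DecidableEq n]

theorem det_sum_vecMulVec_self [CommRing K] (u : n → n → K) :
    (∑ j, vecMulVec (u j) (u j)).det = (of u).det ^ 2 := by
  have h : ∑ j, vecMulVec (u j) (u j) = (of u)ᵀ * of u := by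
    ext i k
    simp [mul_apply, sum_apply, vecMulVec_apply]
  rw [h, det_mul, det_transpose, sq]

theorem det_mul_det_eq_prod_dotProduct [CommRing K] [LinearOrder n] {g b : n → n → K}
    (horth : ∀ i k, i < k → g i ⬝ᵥ b k = 0) :
    (of g).det * (of b).det = ∏ k, g k ⬝ᵥ b k := by
  have htri : (of g * (of b)ᵀ).IsLowerTriangular := fun i k hik => by
    rw [of_mul_transpose_of_apply]
    exact horth i k hik
  rw [← det_transpose (of b), ← det_mul, det_of_isLowerTriangular _ htri]
  simp only [of_mul_transpose_of_apply]

variable [Field K] [LinearOrder K] [IsStrictOrderedRing K]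

theorem abs_det_mul_det_le_factorial_of_abs_dotProduct_le_one {u b : n → n → K}
    (hu : ∀ i k, |u i ⬝ᵥ b k| ≤ 1) :
    |(of u).det * (of b).det| ≤ (Fintype.card n)! := by
  rw [← det_transpose (of b), ← det_mul]
  have h := det_le (A := of u * (of b)ᵀ) (abv := AbsoluteValue.abs) (x := 1) fun i k => by
    simpa only [AbsoluteValue.abs_apply, of_mul_transpose_of_apply] using hu i k
  simpa using h

theorem abs_det_le_factorial_mul_abs_det_of_abs_dotProduct_le [LinearOrder n] {g b u : n → n → K}
    (horth : ∀ i k, i < k → g i ⬝ᵥ b k = 0) (hdiag : ∀ k, g k ⬝ᵥ b k ≠ 0)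
    (hu : ∀ i k, |u i ⬝ᵥ b k| ≤ |g k ⬝ᵥ b k|) :
    |(of u).det| ≤ (Fintype.card n)! * |(of g).det| := by
  set b' : n → n → K := fun k => (g k ⬝ᵥ b k)⁻¹ • b k
  have hdot : ∀ v k, v ⬝ᵥ b' k = v ⬝ᵥ b k / g k ⬝ᵥ b k := fun v k => by
    simp [b', dotProduct_smul, div_eq_inv_mul]
  have hunit : (of g).det * (of b').det = 1 := by
    rw [det_mul_det_eq_prod_dotProduct fun i k hik => by simp [hdot, horth i k hik]]
    exact Finset.prod_eq_one fun k _ => by rw [hdot, div_self (hdiag k)]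
  have hbound := abs_det_mul_det_le_factorial_of_abs_dotProduct_le_one (u := u) (b := b')
    fun i k => by
      rw [hdot, abs_div, div_le_one (abs_pos.mpr (hdiag k))]
      exact hu i k
  calc |(of u).det| = |(of u).det * (of b').det| * |(of g).det| := by
        rw [abs_mul, mul_assoc, ← abs_mul, mul_comm (of b').det, hunit, abs_one, mul_one]
    _ ≤ (Fintype.card n)! * |(of g).det| := by gcongr

end Matrix

section

variable {n K : Type*} [Fintype n] [CommRing K] [LinearOrder K] [IsStrictOrderedRing K]

theorem abs_dotProduct_le_of_mem {F S : Set (n → K)} {b g f : n → K}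
    (hS : ∀ v ∈ S, v ⬝ᵥ b = 0) (hmax : ∀ v ∈ F \ S, |v ⬝ᵥ b| ≤ |g ⬝ᵥ b|) (hf : f ∈ F) :
    |f ⬝ᵥ b| ≤ |g ⬝ᵥ b| := by
  by_cases hfS : f ∈ S
  · rw [hS f hfS, abs_zero]
    exact abs_nonneg _
  · exact hmax f ⟨hf, hfS⟩

theorem dotProduct_ne_zero_of_forall_abs_le {F : Set (n → K)} (hF : Submodule.span K F = ⊤)
    {b g : n → K} (hb : b ≠ 0) (hmax : ∀ f ∈ F, |f ⬝ᵥ b| ≤ |g ⬝ᵥ b|) : g ⬝ᵥ b ≠ 0 := by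
  intro hg
  have hbF : dotProductBilin K K b = 0 := LinearMap.ext_on hF fun f hf => by
    simpa [hg, dotProduct_comm b] using hmax f hf
  exact hb (dotProduct_eq_zero b fun w => LinearMap.congr_fun hbF w)

end

theorem stmt13_general (m : ℕ) (hm : 0 < m) (F : Set (Fin m → ℝ))
    (hFspan : Submodule.span ℝ F = ⊤)
    (g : Fin m → (Fin m → ℝ)) (b : Fin m → (Fin m → ℝ))
    (hbne : ∀ j, b j ≠ 0)
    (hborth : ∀ j : Fin m, ∀ v ∈ Submodule.span ℝ (g '' {i : Fin m | i < j}),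
      b j ⬝ᵥ v = 0)
    (hgmax : ∀ j : Fin m, ∀ f ∈ F \ (g '' {i : Fin m | i < j}),
      |f ⬝ᵥ b j| ≤ |g j ⬝ᵥ b j|)
    (gstar : Fin m → (Fin m → ℝ)) (hstarmem : ∀ j, gstar j ∈ F) :
    (∑ j : Fin m, vecMulVec (g j) (g j)).det ^ ((1 : ℝ) / m) ≥
      (π / (4 * m * Real.Gamma (1 + m / 2) ^ ((2 : ℝ) / m))) *
        (∑ j : Fin m, vecMulVec (gstar j) (gstar j)).det ^ ((1 : ℝ) / m) := by
  have hprev : ∀ k, ∀ v ∈ g '' {i | i < k}, v ⬝ᵥ b k = 0 := fun k v hv => by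
    rw [dotProduct_comm]
    exact hborth k v (Submodule.subset_span hv)
  have hsel : ∀ k, ∀ f ∈ F, |f ⬝ᵥ b k| ≤ |g k ⬝ᵥ b k| := fun k _ hf =>
    abs_dotProduct_le_of_mem (hprev k) (hgmax k) hf
  have hdet : |(of gstar).det| ≤ m ! * |(of g).det| := by
    simpa using abs_det_le_factorial_mul_abs_det_of_abs_dotProduct_le
      (fun i k hik => hprev k _ ⟨i, hik, rfl⟩)
      (fun k => dotProduct_ne_zero_of_forall_abs_le hFspan (hbne k) (hsel k))
      (fun i k => hsel k _ (hstarmem i))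
  rw [det_sum_vecMulVec_self, det_sum_vecMulVec_self, ge_iff_le]
  refine mul_rpow_one_div_le_of_pow_mul_le hm.ne' (by positivity) (sq_nonneg _) ?_
  set c := π / (4 * m * Gamma (1 + m / 2) ^ ((2 : ℝ) / m))
  calc c ^ m * (of gstar).det ^ 2 ≤ c ^ m * (m ! * |(of g).det|) ^ 2 := by
        rw [← sq_abs (of gstar).det]
        gcongr
    _ = c ^ m * (m ! : ℝ) ^ 2 * (of g).det ^ 2 := by rw [mul_pow, sq_abs, ← mul_assoc]
    _ ≤ (of g).det ^ 2 :=
        mul_le_of_le_one_left (sq_nonneg _) (pi_div_pow_mul_factorial_sq_le_one hm.ne')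

/-- D-efficiency bound for the modified Kumar–Yildirim method: if at each step
`j` a nonzero direction `b j` orthogonal to the span of previously chosen
vectors is used and `g j ∈ F \ S_j` maximizes `|f ⬝ b j|`, then
`det(M(S_KY))^{1/m} ≥ (π/(4m·Γ(1+m/2)^{2/m}))·det(M(S*))^{1/m}`. -/
theorem stmt13 (m : ℕ) (hm : 0 < m) (F : Set (Fin m → ℝ)) (hFfin : F.Finite)
    (hFspan : Submodule.span ℝ F = ⊤)
    (g : Fin m → (Fin m → ℝ)) (b : Fin m → (Fin m → ℝ))
    (hbne : ∀ j, b j ≠ 0)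
    (hborth : ∀ j : Fin m, ∀ v ∈ Submodule.span ℝ (g '' {i : Fin m | i < j}),
      b j ⬝ᵥ v = 0)
    (hgmem : ∀ j : Fin m, g j ∈ F \ (g '' {i : Fin m | i < j}))
    (hgmax : ∀ j : Fin m, ∀ f ∈ F \ (g '' {i : Fin m | i < j}),
      |f ⬝ᵥ b j| ≤ |g j ⬝ᵥ b j|)
    (gstar : Fin m → (Fin m → ℝ)) (hstarmem : ∀ j, gstar j ∈ F)
    (hstarinj : Function.Injective gstar)
    (hstaropt : ∀ u : Fin m → (Fin m → ℝ), (∀ j, u j ∈ F) →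
      Function.Injective u →
      (∑ j : Fin m, vecMulVec (u j) (u j)).det ≤
        (∑ j : Fin m, vecMulVec (gstar j) (gstar j)).det) :
    (∑ j : Fin m, vecMulVec (g j) (g j)).det ^ ((1 : ℝ) / m) ≥
      (π / (4 * m * Real.Gamma (1 + m / 2) ^ ((2 : ℝ) / m))) *
        (∑ j : Fin m, vecMulVec (gstar j) (gstar j)).det ^ ((1 : ℝ) / m) :=
  stmt13_general m hm F hFspan g b hbne hborth hgmax gstar hstarmem
end

section
/- Under the setting of the previous identity, for a finite set G ⊂ R^m with every f ∈ G satisfying f'(I_m − P)f > 0: argmax over f ∈ G of (Σ_{i=1}^{r+1} λ_i^{-1}(M + ff'))^{-1} equals argmax over f ∈ G of f'(I_m − P)f / (1 + f'M^+f). -/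
/-!
As `M + ffᵀ` is positive semidefinite of rank at most `r + 1`, its eigenvalues beyond the
`r + 1` largest vanish, so (with Lean's convention `0⁻¹ = 0`) the sum of the reciprocals of the
`r + 1` largest ones is the sum over all of them, which is the trace of the Moore–Penrose inverse
`(M + ffᵀ)⁺`: by uniqueness of that inverse it is computed in an eigenbasis. When `f ∉ C(M)` the
Greville–Meyer rank-one update formula expresses `(M + ffᵀ)⁺` through `M⁺`, giving
`tr (M + ffᵀ)⁺ = tr M⁺ + (1 + fᵀM⁺f) / fᵀ(I − P)f`. Since `tr M⁺ ≥ 0` does not depend on `f`,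
maximising the reciprocal of this trace is the same as maximising `fᵀ(I − P)f / (1 + fᵀM⁺f)`.
-/

open Matrix Finset

structure IsMoorePenroseInverse {R : Type*} [Mul R] [Star R] (a x : R) : Prop where
  self_mul_mul_self : a * x * a = a
  mul_self_mul : x * a * x = x
  isSelfAdjoint_self_mul : IsSelfAdjoint (a * x)
  isSelfAdjoint_mul_self : IsSelfAdjoint (x * a)

namespace IsMoorePenroseInverse

theorem map {R S F : Type*} [Mul R] [Star R] [Mul S] [Star S] [FunLike F R S]
    [MulHomClass F R S] [StarHomClass F R S] (φ : F) {a x : R}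
    (hx : IsMoorePenroseInverse a x) : IsMoorePenroseInverse (φ a) (φ x) where
  self_mul_mul_self := by rw [← map_mul, ← map_mul, hx.self_mul_mul_self]
  mul_self_mul := by rw [← map_mul, ← map_mul, hx.mul_self_mul]
  isSelfAdjoint_self_mul := by rw [← map_mul]; exact hx.isSelfAdjoint_self_mul.map φ
  isSelfAdjoint_mul_self := by rw [← map_mul]; exact hx.isSelfAdjoint_mul_self.map φ

section Semigroup

variable {R : Type*} [Semigroup R] [StarMul R] {a x y : R}

theorem unique (hx : IsMoorePenroseInverse a x) (hy : IsMoorePenroseInverse a y) : x = y := by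
  have hax : a * x = a * y :=
    calc a * x = star x * star a := by rw [← star_mul, hx.isSelfAdjoint_self_mul.star_eq]
      _ = star x * star (a * y * a) := by rw [hy.self_mul_mul_self]
      _ = star (a * x) * star (a * y) := by simp only [star_mul, mul_assoc]
      _ = a * x * (a * y) := by
        rw [hx.isSelfAdjoint_self_mul.star_eq, hy.isSelfAdjoint_self_mul.star_eq]
      _ = a * y := by rw [← mul_assoc, hx.self_mul_mul_self]
  have hxa : x * a = y * a :=
    calc x * a = star a * star x := by rw [← star_mul, hx.isSelfAdjoint_mul_self.star_eq]
      _ = star (a * y * a) * star x := by rw [hy.self_mul_mul_self]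
      _ = star (y * a) * star (x * a) := by simp only [star_mul, mul_assoc]
      _ = y * a * (x * a) := by
        rw [hx.isSelfAdjoint_mul_self.star_eq, hy.isSelfAdjoint_mul_self.star_eq]
      _ = y * a := by rw [mul_assoc, ← mul_assoc a, hx.self_mul_mul_self]
  calc x = x * a * x := hx.mul_self_mul.symm
    _ = y * a * y := by rw [mul_assoc, hax, ← mul_assoc, hxa]
    _ = y := hy.mul_self_mul

protected theorem star (hx : IsMoorePenroseInverse a x) :
    IsMoorePenroseInverse (star a) (star x) where
  self_mul_mul_self := by rw [← star_mul, ← star_mul, ← mul_assoc, hx.self_mul_mul_self]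
  mul_self_mul := by rw [← star_mul, ← star_mul, ← mul_assoc, hx.mul_self_mul]
  isSelfAdjoint_self_mul := by
    rw [← star_mul]; exact IsSelfAdjoint.star_iff.mpr hx.isSelfAdjoint_mul_self
  isSelfAdjoint_mul_self := by
    rw [← star_mul]; exact IsSelfAdjoint.star_iff.mpr hx.isSelfAdjoint_self_mul

theorem isSelfAdjoint (ha : IsSelfAdjoint a) (hx : IsMoorePenroseInverse a x) :
    IsSelfAdjoint x :=
  (hx.unique (ha.star_eq ▸ hx.star)).symm

theorem commute (ha : IsSelfAdjoint a) (hx : IsMoorePenroseInverse a x) : a * x = x * a := by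
  rw [← hx.isSelfAdjoint_self_mul.star_eq, star_mul, ha.star_eq, (hx.isSelfAdjoint ha).star_eq]

/-- For matrices, with `p` idempotent, `h₁` and `h₂` together say that `p` and `a` have the same
range. -/
theorem self_mul_eq_of_mul_eq (hx : IsMoorePenroseInverse a x) {p : R} (hp : IsSelfAdjoint p)
    (h₁ : a * x * p = p) (h₂ : p * (a * x) = a * x) : a * x = p :=
  calc a * x = p * (a * x) := h₂.symm
    _ = star (a * x * p) := by rw [star_mul, hp.star_eq, hx.isSelfAdjoint_self_mul.star_eq]
    _ = p := by rw [h₁, hp.star_eq]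

end Semigroup

section Ring

variable {R : Type*} [Ring R] [StarRing R] {a x : R}

theorem one_sub_self_mul_mul_self (hx : IsMoorePenroseInverse a x) : (1 - a * x) * a = 0 := by
  rw [sub_mul, one_mul, hx.self_mul_mul_self, sub_self]

theorem mul_one_sub_self_mul (hx : IsMoorePenroseInverse a x) : x * (1 - a * x) = 0 := by
  rw [mul_sub, mul_one, ← mul_assoc, hx.mul_self_mul, sub_self]

theorem self_mul_one_sub_self_mul (ha : IsSelfAdjoint a) (hx : IsMoorePenroseInverse a x) :
    a * (1 - a * x) = 0 := by
  rw [mul_sub, mul_one, hx.commute ha, ← mul_assoc, hx.self_mul_mul_self, sub_self]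

theorem one_sub_self_mul_mul (ha : IsSelfAdjoint a) (hx : IsMoorePenroseInverse a x) :
    (1 - a * x) * x = 0 := by
  rw [sub_mul, one_mul, hx.commute ha, hx.mul_self_mul, sub_self]

theorem one_sub_self_mul_mul_one_sub_self_mul (hx : IsMoorePenroseInverse a x) :
    (1 - a * x) * (1 - a * x) = 1 - a * x := by
  rw [sub_mul, one_mul, mul_assoc, hx.mul_one_sub_self_mul, mul_zero, sub_zero]

end Ring

set_option linter.unusedSimpArgs false in
/-- Greville–Meyer formula. The hypotheses `f * y * f = c • f` encode that `f` has rank one: for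
`f = v vᴴ` they hold with `c = vᴴ y v`, and `δ ≠ 0` says that `v` is not in the range of `a`. -/
theorem add_rankOne {K R : Type*} [Field K] [StarRing K] [TrivialStar K] [Ring R] [StarRing R]
    [Algebra K R] [StarModule K R] {a x f : R} (ha : IsSelfAdjoint a)
    (hx : IsMoorePenroseInverse a x) (hf : IsSelfAdjoint f) {δ γ : K} (hδ : δ ≠ 0)
    (hfq : f * (1 - a * x) * f = δ • f) (hfx : f * x * f = γ • f) :
    IsMoorePenroseInverse (a + f) (x - δ⁻¹ • (x * f * (1 - a * x) + (1 - a * x) * f * x) +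
      ((1 + γ) / δ ^ 2) • ((1 - a * x) * f * (1 - a * x))) := by
  have hqs : star (1 - a * x) = 1 - a * x := by
    rw [star_sub, star_one, hx.isSelfAdjoint_self_mul.star_eq]
  have hxs : star x = x := (hx.isSelfAdjoint ha).star_eq
  have hqa := hx.one_sub_self_mul_mul_self
  have hxq := hx.mul_one_sub_self_mul
  have haq := hx.self_mul_one_sub_self_mul ha
  have hqx := hx.one_sub_self_mul_mul ha
  have hqq := hx.one_sub_self_mul_mul_one_sub_self_mul
  set q := 1 - a * x
  have hax : a * x = 1 - q := by simp only [q, sub_sub_cancel]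
  have hxa : x * a = 1 - q := by rw [← hx.commute ha, hax]
  have tail {u v w : R} (h : u * v = w) (z : R) : u * (v * z) = w * z := by rw [← mul_assoc, h]
  have hfqf (z : R) : f * (q * (f * z)) = δ • (f * z) := by
    rw [← mul_assoc, ← mul_assoc, hfq, smul_mul_assoc]
  have hfxf (z : R) : f * (x * (f * z)) = γ • (f * z) := by
    rw [← mul_assoc, ← mul_assoc, hfx, smul_mul_assoc]
  -- Right-nest all products and eliminate `a * x = 1 - q`; what remains are scalar identities.
  constructor <;>
  · simp only [IsSelfAdjoint, star_add, star_sub, star_mul, star_smul, star_trivial, star_one,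
      ha.star_eq, hf.star_eq, hxs, hqs, mul_add, add_mul, mul_sub, sub_mul, smul_mul_assoc,
      mul_smul_comm, mul_assoc, one_mul, mul_one, smul_add, smul_sub, smul_smul, smul_zero,
      zero_mul, mul_zero, haq, hqa, hxq, hqx, hqq, hax, hxa, tail hqq, tail haq, tail hqa,
      tail hxq, tail hqx, tail hax, tail hxa, hfqf, hfxf, hfq, hfx]
    match_scalars <;> field_simp <;> ring

end IsMoorePenroseInverse

theorem Antitone.eq_zero_of_card_ne_zero_le {α : Type*} [PartialOrder α] [Zero α] [DecidableEq α]
    {m k : ℕ} {L : Fin m → α} (hL : Antitone L) (hnn : ∀ i, 0 ≤ L i)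
    (hk : Fintype.card {i // L i ≠ 0} ≤ k) {i : Fin m} (hi : k ≤ i) : L i = 0 := by
  by_contra hne
  have hpos : 0 < L i := (hnn i).lt_of_ne' hne
  have hsub : Finset.Iic i ⊆ Finset.univ.filter fun j => L j ≠ 0 := fun j hj =>
    Finset.mem_filter.mpr ⟨Finset.mem_univ j, (hpos.trans_le (hL (Finset.mem_Iic.mp hj))).ne'⟩
  have := (Finset.card_le_card hsub).trans ((Fintype.card_subtype _).symm.trans_le hk)
  rw [Fin.card_Iic] at this
  omega

namespace Matrix

variable {n K : Type*} [Fintype n]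

theorem vecMulVec_mul_mul_vecMulVec [CommSemiring K] (u v w z : n → K) (A : Matrix n n K) :
    vecMulVec u v * A * vecMulVec w z = (v ⬝ᵥ (A *ᵥ w)) • vecMulVec u z := by
  rw [mul_assoc, mul_vecMulVec, vecMulVec_mul_vecMulVec, vecMulVec_smul]

theorem rank_add_le [Field K] {m : Type*} [Fintype m] (A B : Matrix m n K) :
    (A + B).rank ≤ A.rank + B.rank := by
  have hle : LinearMap.range (A + B).mulVecLin ≤
      LinearMap.range A.mulVecLin ⊔ LinearMap.range B.mulVecLin := by
    rintro _ ⟨v, rfl⟩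
    exact Submodule.mem_sup.mpr ⟨A *ᵥ v, ⟨v, rfl⟩, B *ᵥ v, ⟨v, rfl⟩, (add_mulVec A B v).symm⟩
  exact (Submodule.finrank_mono hle).trans (Submodule.finrank_add_le_finrank_add_finrank _ _)

theorem mul_eq_self_of_range_le [CommRing K] {m p : Type*} [Fintype m] [Fintype p]
    {E : Matrix m m K} {A : Matrix m n K} {B : Matrix m p K} (hE : E * A = A)
    (h : LinearMap.range B.mulVecLin ≤ LinearMap.range A.mulVecLin) : E * B = B := by
  refine ext_iff_mulVec.mpr fun v => ?_
  obtain ⟨w, hw⟩ := h ⟨v, rfl⟩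
  simp only [mulVecLin_apply] at hw
  rw [← mulVec_mulVec, ← hw, mulVec_mulVec, hE]

theorem PosSemidef.sum_filter_lt_inv_eq {m k : ℕ} {N : Matrix (Fin m) (Fin m) ℝ}
    (hN : N.PosSemidef) (hk : N.rank ≤ k) {L : Fin m → ℝ} (hL : Antitone L)
    (σ : Equiv.Perm (Fin m)) (hσ : L = hN.isHermitian.eigenvalues ∘ σ) :
    ∑ i ∈ Finset.univ.filter (fun i : Fin m => (i : ℕ) < k), (L i)⁻¹ =
      ∑ i, (hN.isHermitian.eigenvalues i)⁻¹ := by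
  have hcard : Fintype.card {i // L i ≠ 0} ≤ k := by
    rw [Fintype.card_congr (σ.subtypeEquiv (q := fun j => hN.isHermitian.eigenvalues j ≠ 0)
      fun i => by rw [hσ, Function.comp_apply]),
      ← hN.isHermitian.rank_eq_card_non_zero_eigs]
    exact hk
  have hnn (i : Fin m) : 0 ≤ L i := hσ ▸ hN.eigenvalues_nonneg (σ i)
  rw [Finset.sum_filter_of_ne fun i _ hi => ?_, hσ]
  · exact Equiv.sum_comp σ fun i => (hN.isHermitian.eigenvalues i)⁻¹
  · by_contra hik
    exact hi (by rw [hL.eq_zero_of_card_ne_zero_le hnn hcard (not_lt.mp hik), _root_.inv_zero])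

end Matrix

namespace IsMoorePenroseInverse

variable {n : Type*} [Fintype n]

theorem self_mul_eq_of_range_eq {K : Type*} [CommRing K] [StarRing K] {A X P : Matrix n n K}
    (hX : IsMoorePenroseInverse A X) (hP : IsSelfAdjoint P) (hPP : P * P = P)
    (hrange : LinearMap.range P.mulVecLin = LinearMap.range A.mulVecLin) : A * X = P := by
  refine hX.self_mul_eq_of_mul_eq hP (mul_eq_self_of_range_le hX.self_mul_mul_self hrange.le) ?_
  refine mul_eq_self_of_range_le hPP (hrange ▸ ?_)
  rw [mulVecLin_mul]
  exact LinearMap.range_comp_le_range _ _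

theorem posSemidef {R : Type*} [CommRing R] [PartialOrder R] [StarRing R] {A X : Matrix n n R}
    (hA : A.PosSemidef) (hX : IsMoorePenroseInverse A X) : X.PosSemidef := by
  have h := hA.conjTranspose_mul_mul_same X
  rwa [← star_eq_conjTranspose, (hX.isSelfAdjoint hA.isHermitian).star_eq, hX.mul_self_mul] at h

theorem add_vecMulVec {K : Type*} [DecidableEq n] [Field K] [StarRing K] [TrivialStar K]
    {M X : Matrix n n K} (hM : IsSelfAdjoint M) (hX : IsMoorePenroseInverse M X) {f : n → K}
    (hδ : f ⬝ᵥ ((1 - M * X) *ᵥ f) ≠ 0) :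
    ∃ Y, IsMoorePenroseInverse (M + vecMulVec f f) Y ∧
      Y.trace = X.trace + (1 + f ⬝ᵥ (X *ᵥ f)) / (f ⬝ᵥ ((1 - M * X) *ᵥ f)) := by
  have hf : IsSelfAdjoint (vecMulVec f f) := by
    rw [IsSelfAdjoint, star_eq_conjTranspose, conjTranspose_vecMulVec, star_trivial]
  refine ⟨_, hX.add_rankOne hM hf hδ (vecMulVec_mul_mul_vecMulVec _ _ _ _ _)
    (vecMulVec_mul_mul_vecMulVec _ _ _ _ _), ?_⟩
  have h₁ : (X * vecMulVec f f * (1 - M * X)).trace = 0 := by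
    rw [trace_mul_cycle, hX.one_sub_self_mul_mul hM, zero_mul, trace_zero]
  have h₂ : ((1 - M * X) * vecMulVec f f * X).trace = 0 := by
    rw [trace_mul_cycle, hX.mul_one_sub_self_mul, zero_mul, trace_zero]
  have h₃ : ((1 - M * X) * vecMulVec f f * (1 - M * X)).trace = f ⬝ᵥ ((1 - M * X) *ᵥ f) := by
    rw [trace_mul_cycle, hX.one_sub_self_mul_mul_one_sub_self_mul, mul_vecMulVec,
      trace_vecMulVec, dotProduct_comm]
  rw [trace_add, trace_sub, trace_smul, trace_add, h₁, h₂, trace_smul, h₃, add_zero, smul_zero,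
    sub_zero, smul_eq_mul]
  field_simp

theorem diagonal_inv {K : Type*} [DecidableEq n] [Field K] [StarRing K]
    {d : n → K} (hd : ∀ i, IsSelfAdjoint (d i)) :
    IsMoorePenroseInverse (diagonal d) (diagonal d⁻¹) where
  self_mul_mul_self := by simp only [diagonal_mul_diagonal, Pi.inv_apply, mul_inv_mul_cancel]
  mul_self_mul := by
    simp only [diagonal_mul_diagonal, Pi.inv_apply]
    congr 1; funext i; simpa using mul_inv_mul_cancel (d i)⁻¹
  isSelfAdjoint_self_mul := by
    rw [diagonal_mul_diagonal]
    exact isHermitian_diagonal_iff.mpr fun i => (hd i).mul (hd i).inv₀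
  isSelfAdjoint_mul_self := by
    rw [diagonal_mul_diagonal]
    exact isHermitian_diagonal_iff.mpr fun i => (hd i).inv₀.mul (hd i)

theorem trace_eq_sum_inv_eigenvalues {𝕜 : Type*} [RCLike 𝕜] [DecidableEq n]
    {A X : Matrix n n 𝕜} (hA : A.IsHermitian) (hX : IsMoorePenroseInverse A X) :
    X.trace = ∑ i, ((hA.eigenvalues i : 𝕜))⁻¹ := by
  set φ := Unitary.conjStarAlgAut 𝕜 _ hA.eigenvectorUnitary
  have hY : IsMoorePenroseInverse A (φ (diagonal (RCLike.ofReal ∘ hA.eigenvalues)⁻¹)) := by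
    have := (diagonal_inv (d := RCLike.ofReal ∘ hA.eigenvalues)
      fun i => RCLike.conj_ofReal _).map φ
    rwa [← hA.spectral_theorem] at this
  rw [hX.unique hY, Unitary.conjStarAlgAut_apply, trace_mul_cycle, Unitary.coe_star_mul_self,
    one_mul, trace_diagonal]
  rfl

theorem sum_filter_lt_inv_eq_trace_add_div {m k : ℕ}
    {M X : Matrix (Fin m) (Fin m) ℝ} (hM : M.PosSemidef) (hX : IsMoorePenroseInverse M X)
    (hk : M.rank + 1 ≤ k) {f : Fin m → ℝ} (hδ : f ⬝ᵥ ((1 - M * X) *ᵥ f) ≠ 0)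
    (hH : (M + vecMulVec f f).IsHermitian) {L : Fin m → ℝ} (hL : Antitone L)
    (σ : Equiv.Perm (Fin m)) (hσ : L = hH.eigenvalues ∘ σ) :
    ∑ i ∈ Finset.univ.filter (fun i : Fin m => (i : ℕ) < k), (L i)⁻¹ =
      X.trace + (1 + f ⬝ᵥ (X *ᵥ f)) / (f ⬝ᵥ ((1 - M * X) *ᵥ f)) := by
  obtain ⟨Y, hY, htr⟩ := hX.add_vecMulVec hM.isHermitian hδ
  have hN := hM.add (posSemidef_vecMulVec_self_star f)
  have hrank : (M + vecMulVec f f).rank ≤ k :=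
    (rank_add_le _ _).trans ((Nat.add_le_add_left (rank_vecMulVec_le f f) _).trans hk)
  have htrY := hY.trace_eq_sum_inv_eigenvalues hN.isHermitian
  simp only [RCLike.ofReal_real_eq_id, id_eq] at htrY
  rw [hN.sum_filter_lt_inv_eq hrank hL σ hσ, ← htrY, htr]

end IsMoorePenroseInverse

theorem inv_add_div_le_inv_add_div_iff {t a b c d : ℝ} (ht : 0 ≤ t) (ha : 0 < a) (hb : 0 < b)
    (hc : 0 < c) (hd : 0 < d) : (t + b / a)⁻¹ ≤ (t + d / c)⁻¹ ↔ a / b ≤ c / d := by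
  rw [inv_le_inv₀ (by positivity) (by positivity), add_le_add_iff_left, div_le_div_iff₀ hc ha,
    div_le_div_iff₀ hb hd, mul_comm d, mul_comm c]

theorem stmt16_general (m r : ℕ) (V : Matrix (Fin m) (Fin r) ℝ)
    (M : Matrix (Fin m) (Fin m) ℝ) (hM : M = V * Vᵀ)
    (P : Matrix (Fin m) (Fin m) ℝ)
    (hPsymm : Pᵀ = P) (hPidem : P * P = P)
    (hPrange : LinearMap.range P.mulVecLin = LinearMap.range M.mulVecLin)
    (Mp : Matrix (Fin m) (Fin m) ℝ)
    (hMp1 : M * Mp * M = M) (hMp2 : Mp * M * Mp = Mp)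
    (hMp3 : (M * Mp)ᵀ = M * Mp) (hMp4 : (Mp * M)ᵀ = Mp * M)
    (G : Set (Fin m → ℝ))
    (hGpos : ∀ f ∈ G, 0 < f ⬝ᵥ ((1 - P) *ᵥ f))
    (hH : ∀ f : Fin m → ℝ, (M + vecMulVec f f).IsHermitian)
    (L : (Fin m → ℝ) → (Fin m → ℝ))
    (hLanti : ∀ f, Antitone (L f))
    (hLperm : ∀ f, ∃ σ : Equiv.Perm (Fin m), L f = (hH f).eigenvalues ∘ σ) :
    {f ∈ G | ∀ g ∈ G,
        (∑ i ∈ Finset.univ.filter (fun i : Fin m => (i : ℕ) < r + 1), (L g i)⁻¹)⁻¹ ≤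
        (∑ i ∈ Finset.univ.filter (fun i : Fin m => (i : ℕ) < r + 1), (L f i)⁻¹)⁻¹} =
    {f ∈ G | ∀ g ∈ G,
        (g ⬝ᵥ ((1 - P) *ᵥ g)) / (1 + g ⬝ᵥ (Mp *ᵥ g)) ≤
        (f ⬝ᵥ ((1 - P) *ᵥ f)) / (1 + f ⬝ᵥ (Mp *ᵥ f))} := by
  have hsa (A : Matrix (Fin m) (Fin m) ℝ) (h : Aᵀ = A) : IsSelfAdjoint A := by
    rwa [IsSelfAdjoint, star_eq_conjTranspose, conjTranspose_eq_transpose_of_trivial]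
  have hMpsd : M.PosSemidef := by
    rw [hM, ← conjTranspose_eq_transpose_of_trivial]
    exact posSemidef_self_mul_conjTranspose V
  have hMp : IsMoorePenroseInverse M Mp := ⟨hMp1, hMp2, hsa _ hMp3, hsa _ hMp4⟩
  have hP : M * Mp = P := hMp.self_mul_eq_of_range_eq (hsa P hPsymm) hPidem hPrange
  have hMrank : M.rank + 1 ≤ r + 1 :=
    Nat.add_le_add_right (hM ▸ (rank_mul_le_left V Vᵀ).trans (rank_le_width V)) 1
  have key (f) (hf : f ∈ G) :
      ∑ i ∈ Finset.univ.filter (fun i : Fin m => (i : ℕ) < r + 1), (L f i)⁻¹ =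
        Mp.trace + (1 + f ⬝ᵥ (Mp *ᵥ f)) / (f ⬝ᵥ ((1 - P) *ᵥ f)) := by
    obtain ⟨σ, hσ⟩ := hLperm f
    rw [← hP] at hGpos ⊢
    exact hMp.sum_filter_lt_inv_eq_trace_add_div hMpsd hMrank (hGpos f hf).ne' (hH f) (hLanti f)
      σ hσ
  have hβ (g : Fin m → ℝ) : 0 < 1 + g ⬝ᵥ (Mp *ᵥ g) := by
    have := (hMp.posSemidef hMpsd).dotProduct_mulVec_nonneg g
    rw [star_trivial] at this
    linarith
  ext f
  simp only [Set.mem_ofPred_eq, and_congr_right_iff]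
  intro hf
  refine forall₂_congr fun g hg => ?_
  rw [key f hf, key g hg]
  exact inv_add_div_le_inv_add_div_iff (hMp.posSemidef hMpsd).trace_nonneg (hGpos g hg) (hβ g)
    (hGpos f hf) (hβ f)

/-- A-optimality Galil–Kiefer selection rule: over a finite `G` with
`fᵀ(I−P)f > 0` for all `f ∈ G`, the maximizers of
`(Σ_{i=1}^{r+1} λ_i⁻¹(M + ffᵀ))⁻¹` coincide with the maximizers of
`fᵀ(I−P)f / (1 + fᵀM⁺f)`. -/
theorem stmt16 (m r : ℕ) (hr : r < m) (V : Matrix (Fin m) (Fin r) ℝ)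
    (hrank : V.rank = r)
    (M : Matrix (Fin m) (Fin m) ℝ) (hM : M = V * Vᵀ)
    (P : Matrix (Fin m) (Fin m) ℝ)
    (hPsymm : Pᵀ = P) (hPidem : P * P = P)
    (hPrange : LinearMap.range P.mulVecLin = LinearMap.range M.mulVecLin)
    (Mp : Matrix (Fin m) (Fin m) ℝ)
    (hMp1 : M * Mp * M = M) (hMp2 : Mp * M * Mp = Mp)
    (hMp3 : (M * Mp)ᵀ = M * Mp) (hMp4 : (Mp * M)ᵀ = Mp * M)
    (G : Set (Fin m → ℝ)) (hGfin : G.Finite)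
    (hGpos : ∀ f ∈ G, 0 < f ⬝ᵥ ((1 - P) *ᵥ f))
    (hH : ∀ f : Fin m → ℝ, (M + vecMulVec f f).IsHermitian)
    (L : (Fin m → ℝ) → (Fin m → ℝ))
    (hLanti : ∀ f, Antitone (L f))
    (hLperm : ∀ f, ∃ σ : Equiv.Perm (Fin m), L f = (hH f).eigenvalues ∘ σ) :
    {f ∈ G | ∀ g ∈ G,
        (∑ i ∈ Finset.univ.filter (fun i : Fin m => (i : ℕ) < r + 1), (L g i)⁻¹)⁻¹ ≤
        (∑ i ∈ Finset.univ.filter (fun i : Fin m => (i : ℕ) < r + 1), (L f i)⁻¹)⁻¹} =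
    {f ∈ G | ∀ g ∈ G,
        (g ⬝ᵥ ((1 - P) *ᵥ g)) / (1 + g ⬝ᵥ (Mp *ᵥ g)) ≤
        (f ⬝ᵥ ((1 - P) *ᵥ f)) / (1 + f ⬝ᵥ (Mp *ᵥ f))} :=
  stmt16_general m r V M hM P hPsymm hPidem hPrange Mp hMp1 hMp2 hMp3 hMp4 G hGpos hH L hLanti
    hLperm
end
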